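/- arXiv:2403.00333 — 2 statements merged into one kernel-verified Lean document; each statement's English description precedes it below -/
import Mathlib

section
/- Let d = 2 and g = 3, and let τ = (1 3)(2 4) ∈ S₄ (the permutation of {1,2,3,4} given by τ = (1 d+1)(2 d+2) with d = 2). Then the number of tuples (σ, η₁, η₂, α) ∈ (S₄)⁴ satisfying: (1) η₁ and η₂ are transpositions, where for each s, writing η_s = (i_s j_s), one has j_s ≠ τ(i_s); (2) τστ = σ⁻¹ and for every x ∈ {1,2,3,4} the element τ(x) does not lie in the ⟨σ⟩-orbit of x; (3) ατ = τα; (4) η₂η₁σ(τη₁τ)(τη₂τ) = ασα⁻¹; (5) the subgroup generated by σ, η₁, η₂, τη₁τ, τη₂τ, α acts transitively on {1,2,3,4}; equals 128. Consequently, dividing by (2d)!! = 8, the twisted Hurwitz number of an elliptic curve satisfies h̃_{2,3} = 16. -/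
open Equiv Equiv.Perm

/-- The fixed-point-free involution `τ = (1 3)(2 4)` on `{1,2,3,4}`,
realized on `Fin 4` (with points relabelled `0,1,2,3`) as `(0 2)(1 3)`. -/
def tau23 : Equiv.Perm (Fin 4) := Equiv.swap 0 2 * Equiv.swap 1 3

/-- The conditions defining the tuples counted by the twisted Hurwitz number
`h̃_{2,3}` of an elliptic curve. -/
def TwistedTuple (σ η₁ η₂ α : Equiv.Perm (Fin 4)) : Prop :=
  -- η₁ is a transposition (i j) with j ≠ τ(i)
  (∃ i j : Fin 4, i ≠ j ∧ j ≠ tau23 i ∧ η₁ = Equiv.swap i j) ∧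
  -- η₂ is a transposition (i j) with j ≠ τ(i)
  (∃ i j : Fin 4, i ≠ j ∧ j ≠ tau23 i ∧ η₂ = Equiv.swap i j) ∧
  -- τστ = σ⁻¹
  tau23 * σ * tau23 = σ⁻¹ ∧
  -- σ has no self-symmetric cycles: τ(x) is never in the ⟨σ⟩-orbit of x
  (∀ x : Fin 4, ¬ σ.SameCycle x (tau23 x)) ∧
  -- α commutes with τ
  α * tau23 = tau23 * α ∧
  -- the product condition η₂η₁σ(τη₁τ)(τη₂τ) = ασα⁻¹
  η₂ * η₁ * σ * (tau23 * η₁ * tau23) * (tau23 * η₂ * tau23) = α * σ * α⁻¹ ∧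
  -- transitivity of ⟨σ, η₁, η₂, τη₁τ, τη₂τ, α⟩ on {1,…,4}
  (∀ x y : Fin 4, ∃ g ∈ Subgroup.closure
      ({σ, η₁, η₂, tau23 * η₁ * tau23, tau23 * η₂ * tau23, α} :
        Set (Equiv.Perm (Fin 4))), g x = y)

/-! ### Auxiliary decidable reformulations -/

/-- The generators (together with `1`) as a finset. -/
abbrev genL (σ η₁ η₂ α : Equiv.Perm (Fin 4)) : Finset (Equiv.Perm (Fin 4)) :=
  {1, σ, η₁, η₂, tau23 * η₁ * tau23, tau23 * η₂ * tau23, α}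

/-- Depth-3 reachability from `0` by words in the generators. -/
abbrev Reach (σ η₁ η₂ α : Equiv.Perm (Fin 4)) : Prop :=
  ∀ y : Fin 4, ∃ a ∈ genL σ η₁ η₂ α, ∃ b ∈ genL σ η₁ η₂ α, ∃ c ∈ genL σ η₁ η₂ α,
    (a * b * c) 0 = y

/-- The pair `{p, q}` is invariant under every generator. -/
abbrev Inv2 (p q : Fin 4) (σ η₁ η₂ α : Equiv.Perm (Fin 4)) : Prop :=
  ∀ g ∈ genL σ η₁ η₂ α, (g p = p ∨ g p = q) ∧ (g q = p ∨ g q = q)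

lemma mem_closure_of_mem_genL (σ η₁ η₂ α : Equiv.Perm (Fin 4)) (g : Equiv.Perm (Fin 4))
    (hg : g ∈ genL σ η₁ η₂ α) :
    g ∈ Subgroup.closure
      ({σ, η₁, η₂, tau23 * η₁ * tau23, tau23 * η₂ * tau23, α} :
        Set (Equiv.Perm (Fin 4))) := by
  simp only [genL, Finset.mem_insert, Finset.mem_singleton] at hg
  rcases hg with rfl | rfl | rfl | rfl | rfl | rfl | rfl
  · exact one_mem _
  all_goals exact Subgroup.subset_closure (by simp)

lemma trans_of_reach (σ η₁ η₂ α : Equiv.Perm (Fin 4)) (h : Reach σ η₁ η₂ α) :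
    ∀ x y : Fin 4, ∃ g ∈ Subgroup.closure
      ({σ, η₁, η₂, tau23 * η₁ * tau23, tau23 * η₂ * tau23, α} :
        Set (Equiv.Perm (Fin 4))), g x = y := by
  have key : ∀ x : Fin 4, ∃ g ∈ Subgroup.closure
      ({σ, η₁, η₂, tau23 * η₁ * tau23, tau23 * η₂ * tau23, α} :
        Set (Equiv.Perm (Fin 4))), g 0 = x := by
    intro x
    obtain ⟨a, ha, b, hb, c, hc, hx⟩ := h x
    exact ⟨a * b * c,
      mul_mem (mul_mem (mem_closure_of_mem_genL σ η₁ η₂ α a ha)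
        (mem_closure_of_mem_genL σ η₁ η₂ α b hb)) (mem_closure_of_mem_genL σ η₁ η₂ α c hc), hx⟩
  intro x y
  obtain ⟨gx, hgx, hgx0⟩ := key x
  obtain ⟨gy, hgy, hgy0⟩ := key y
  refine ⟨gy * gx⁻¹, mul_mem hgy (inv_mem hgx), ?_⟩
  have : gx⁻¹ x = 0 := by rw [← hgx0]; simp
  simp [Equiv.Perm.mul_apply, this, hgy0]

lemma not_trans_of_inv2 (p q z : Fin 4) (hpq : p ≠ q) (hzp : z ≠ p) (hzq : z ≠ q)
    (σ η₁ η₂ α : Equiv.Perm (Fin 4)) (h : Inv2 p q σ η₁ η₂ α) :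
    ¬ (∀ x y : Fin 4, ∃ g ∈ Subgroup.closure
      ({σ, η₁, η₂, tau23 * η₁ * tau23, tau23 * η₂ * tau23, α} :
        Set (Equiv.Perm (Fin 4))), g x = y) := by
  intro htrans
  obtain ⟨g, hg, hgz⟩ := htrans p z
  have claim : ∀ g' ∈ Subgroup.closure
      ({σ, η₁, η₂, tau23 * η₁ * tau23, tau23 * η₂ * tau23, α} :
        Set (Equiv.Perm (Fin 4))), (g' p = p ∨ g' p = q) ∧ (g' q = p ∨ g' q = q) := by
    intro g' hg'
    induction hg' using Subgroup.closure_induction with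
    | mem x hx =>
        refine h x ?_
        simp only [Set.mem_insert_iff, Set.mem_singleton_iff] at hx
        simp only [genL, Finset.mem_insert, Finset.mem_singleton]
        tauto
    | one => simp
    | mul x y hx hy ihx ihy =>
        simp only [Equiv.Perm.mul_apply]
        constructor
        · rcases ihy.1 with h' | h' <;> rw [h']
          · exact ihx.1
          · exact ihx.2
        · rcases ihy.2 with h' | h' <;> rw [h']
          · exact ihx.1
          · exact ihx.2
    | inv x hx ihx =>
        rcases ihx.1 with h1 | h1
        · have h2 : x q = q := by
            rcases ihx.2 with h2 | h2
            · exact absurd (x.injective (h2.trans h1.symm)) hpq.symm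
            · exact h2
          constructor
          · left; rw [Equiv.Perm.inv_eq_iff_eq]; exact h1.symm
          · right; rw [Equiv.Perm.inv_eq_iff_eq]; exact h2.symm
        · have h2 : x q = p := by
            rcases ihx.2 with h2 | h2
            · exact h2
            · exact absurd (x.injective (h1.trans h2.symm)) hpq
          constructor
          · right; rw [Equiv.Perm.inv_eq_iff_eq]; exact h2.symm
          · left; rw [Equiv.Perm.inv_eq_iff_eq]; exact h1.symm
  rcases (claim g hg).1 with h' | h'
  · exact hzp (hgz ▸ h')
  · exact hzq (hgz ▸ h')

/-- Explicit list of admissible `σ`. -/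
abbrev S3 : Finset (Equiv.Perm (Fin 4)) :=
  {1, Equiv.swap 0 1 * Equiv.swap 2 3, Equiv.swap 0 3 * Equiv.swap 1 2}

/-- Explicit list of admissible transpositions `η`. -/
abbrev EE : Finset (Equiv.Perm (Fin 4)) :=
  {Equiv.swap 0 1, Equiv.swap 0 3, Equiv.swap 1 2, Equiv.swap 2 3}

/-- Explicit list of `α` commuting with `τ`. -/
abbrev BB : Finset (Equiv.Perm (Fin 4)) :=
  {1, Equiv.swap 1 3, Equiv.swap 0 1 * Equiv.swap 2 3,
   Equiv.swap 0 1 * Equiv.swap 1 2 * Equiv.swap 2 3, Equiv.swap 0 2,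
   Equiv.swap 0 2 * Equiv.swap 1 3, Equiv.swap 0 1 * Equiv.swap 0 2 * Equiv.swap 0 3,
   Equiv.swap 0 3 * Equiv.swap 1 2}

lemma sigma_iff (σ : Equiv.Perm (Fin 4)) :
    (tau23 * σ * tau23 = σ⁻¹ ∧ ∀ x : Fin 4, ¬ σ.SameCycle x (tau23 x)) ↔ σ ∈ S3 := by
  revert σ; decide

lemma eta_iff (η : Equiv.Perm (Fin 4)) :
    (∃ i j : Fin 4, i ≠ j ∧ j ≠ tau23 i ∧ η = Equiv.swap i j) ↔ η ∈ EE := by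
  revert η; decide

lemma alpha_iff (α : Equiv.Perm (Fin 4)) :
    α * tau23 = tau23 * α ↔ α ∈ BB := by
  revert α; decide

set_option maxRecDepth 10000 in
lemma key_inv2 : ∀ σ ∈ S3, ∀ η₁ ∈ EE, ∀ η₂ ∈ EE, ∀ α ∈ BB,
    η₂ * η₁ * σ * (tau23 * η₁ * tau23) * (tau23 * η₂ * tau23) = α * σ * α⁻¹ →
    Reach σ η₁ η₂ α ∨ Inv2 0 1 σ η₁ η₂ α ∨ Inv2 0 3 σ η₁ η₂ α := by
  decide

/-- The explicit finset of twisted tuples. -/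
abbrev TT : Finset (Equiv.Perm (Fin 4) × Equiv.Perm (Fin 4) × Equiv.Perm (Fin 4) ×
    Equiv.Perm (Fin 4)) :=
  (S3 ×ˢ EE ×ˢ EE ×ˢ BB).filter fun t =>
    t.2.2.1 * t.2.1 * t.1 * (tau23 * t.2.1 * tau23) * (tau23 * t.2.2.1 * tau23) =
      t.2.2.2 * t.1 * t.2.2.2⁻¹ ∧ Reach t.1 t.2.1 t.2.2.1 t.2.2.2

lemma twisted_iff_mem (t : Equiv.Perm (Fin 4) × Equiv.Perm (Fin 4) × Equiv.Perm (Fin 4) ×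
    Equiv.Perm (Fin 4)) : TwistedTuple t.1 t.2.1 t.2.2.1 t.2.2.2 ↔ t ∈ TT := by
  obtain ⟨σ, η₁, η₂, α⟩ := t
  simp only [TT, Finset.mem_filter, Finset.mem_product]
  constructor
  · rintro ⟨h1, h2, h3, h4, h5, h6, h7⟩
    have hσ : σ ∈ S3 := (sigma_iff σ).mp ⟨h3, h4⟩
    have hη₁ : η₁ ∈ EE := (eta_iff η₁).mp h1
    have hη₂ : η₂ ∈ EE := (eta_iff η₂).mp h2
    have hα : α ∈ BB := (alpha_iff α).mp h5
    have hreach : Reach σ η₁ η₂ α := by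
      rcases key_inv2 σ hσ η₁ hη₁ η₂ hη₂ α hα h6 with hre | hI | hI
      · exact hre
      · exact absurd h7 (not_trans_of_inv2 0 1 2 (by decide) (by decide) (by decide) σ η₁ η₂ α hI)
      · exact absurd h7 (not_trans_of_inv2 0 3 1 (by decide) (by decide) (by decide) σ η₁ η₂ α hI)
    exact ⟨⟨hσ, hη₁, hη₂, hα⟩, h6, hreach⟩
  · rintro ⟨⟨hσ, hη₁, hη₂, hα⟩, h6, hreach⟩
    obtain ⟨h3, h4⟩ := (sigma_iff σ).mpr hσ
    exact ⟨(eta_iff η₁).mpr hη₁, (eta_iff η₂).mpr hη₂, h3, h4, (alpha_iff α).mpr hα, h6,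
      trans_of_reach σ η₁ η₂ α hreach⟩

set_option maxRecDepth 10000 in
lemma TT_card : TT.card = 128 := by decide

/-- The number of tuples `(σ, η₁, η₂, α)` satisfying the twisted conditions for
`d = 2`, `g = 3` is `128`; dividing by `(2d)!! = 8` gives the twisted Hurwitz
number `h̃_{2,3} = 16`. -/
theorem twisted_hurwitz_two_three :
    Nat.card {t : Equiv.Perm (Fin 4) × Equiv.Perm (Fin 4) × Equiv.Perm (Fin 4) ×
        Equiv.Perm (Fin 4) // TwistedTuple t.1 t.2.1 t.2.2.1 t.2.2.2} = 128 ∧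
    (Nat.card {t : Equiv.Perm (Fin 4) × Equiv.Perm (Fin 4) × Equiv.Perm (Fin 4) ×
        Equiv.Perm (Fin 4) // TwistedTuple t.1 t.2.1 t.2.2.1 t.2.2.2} : ℚ) / 8 = 16 := by
  have hcard : Nat.card {t : Equiv.Perm (Fin 4) × Equiv.Perm (Fin 4) × Equiv.Perm (Fin 4) ×
      Equiv.Perm (Fin 4) // TwistedTuple t.1 t.2.1 t.2.2.1 t.2.2.2} = 128 := by
    rw [Nat.card_congr (Equiv.subtypeEquivRight fun t => twisted_iff_mem t)]
    rw [Nat.card_eq_finsetCard]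
    exact TT_card
  exact ⟨hcard, by rw [hcard]; norm_num⟩
end

section
/- Let d ≥ 2 and let τ = (1 d+1)(2 d+2)⋯(d 2d) ∈ S_{2d}. Let c₁ and c₂ be d-cycles in S_{2d} whose supports A = supp(c₁) and B = supp(c₂) satisfy A ∩ τ(A) = ∅ and B ∩ τ(B) = ∅ (so {1,…,2d} = A ⊔ τ(A) = B ⊔ τ(B)). Then the number of permutations α ∈ S_{2d} satisfying ατ = τα and αc₁α⁻¹ = c₂ is exactly d. -/
/-!
Write `τ` for the involution and `S`, `T` for the supports of `c₁`, `c₂`; both are transversals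
of the orbits `{x, τ x}`. A conjugator `α` commuting with `τ` is determined by `α a` for one
`a ∈ S`: on `S` it is determined because `S` is a single `c₁`-cycle, and off `S` because
`α x = τ (α (τ x))`. Conversely, for every `b ∈ T` some conjugator `σ` of `c₁` to `c₂` sends `a`
to `b`, and taking `σ` on `S` and `τ σ τ` off `S` makes it commute with `τ`. Hence these
conjugators correspond to the points of `T`.
-/

open Finset Function

namespace Equiv.Perm

variable {X : Type*}

theorem finRotate_pow_self (n : ℕ) : finRotate n ^ n = 1 := by
  rcases lt_or_ge n 2 with h | h
  · interval_cases n <;> exact Subsingleton.elim _ _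
  · have h_order := (isCycle_finRotate_of_le h).orderOf
    rw [support_finRotate_of_le h, card_univ, Fintype.card_fin] at h_order
    simpa [h_order] using pow_orderOf_eq_one (finRotate n)

theorem involutive_finRotate_pow_half (d : ℕ) : Involutive ⇑(finRotate (2 * d) ^ d) := fun x => by
  rw [← mul_apply, ← pow_add, ← two_mul, finRotate_pow_self, one_apply]

theorem apply_zpow_of_conj_eq {α c₁ c₂ : Perm X} (h : α * c₁ * α⁻¹ = c₂) (k : ℤ) (x : X) :
    α ((c₁ ^ k) x) = (c₂ ^ k) (α x) := by
  simp [← h, conj_zpow]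

variable [DecidableEq X]

def twistedExtension (τ σ : Perm X) (S : Finset X) (x : X) : X :=
  if x ∈ S then σ x else τ (σ (τ x))

theorem twistedExtension_of_mem {τ σ : Perm X} {S : Finset X} {x : X} (hx : x ∈ S) :
    twistedExtension τ σ S x = σ x := if_pos hx

theorem twistedExtension_of_notMem {τ σ : Perm X} {S : Finset X} {x : X} (hx : x ∉ S) :
    twistedExtension τ σ S x = τ (σ (τ x)) := if_neg hx

section Involution

variable {τ σ : Perm X} {S T : Finset X} (hτ : Involutive τ)
  (hS : ∀ x, x ∉ S ↔ τ x ∈ S) (hT : ∀ y, y ∉ T ↔ τ y ∈ T)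
include hτ hS

theorem twistedExtension_apply_involution (x : X) :
    twistedExtension τ σ S (τ x) = τ (twistedExtension τ σ S x) := by
  by_cases hx : x ∈ S
  · have hτx : τ x ∉ S := by rw [hS, hτ]; exact hx
    rw [twistedExtension_of_notMem hτx, hτ, twistedExtension_of_mem hx]
  · rw [twistedExtension_of_mem ((hS x).mp hx), twistedExtension_of_notMem hx, hτ]

include hT

theorem twistedExtension_mem_iff (hσ : ∀ x, σ x ∈ T ↔ x ∈ S) (x : X) :
    twistedExtension τ σ S x ∈ T ↔ x ∈ S := by
  by_cases hx : x ∈ S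
  · rw [twistedExtension_of_mem hx, hσ]
  · rw [twistedExtension_of_notMem hx, ← not_iff_not, hT, hτ, hσ, ← hS]

theorem leftInverse_twistedExtension (hσ : ∀ x, σ x ∈ T ↔ x ∈ S) :
    LeftInverse (twistedExtension τ σ⁻¹ T) (twistedExtension τ σ S) := fun x => by
  have hx' := twistedExtension_mem_iff hτ hS hT hσ x
  by_cases hx : x ∈ S
  · rw [twistedExtension_of_mem (hx'.mpr hx), twistedExtension_of_mem hx]
    simp
  · rw [twistedExtension_of_notMem (mt hx'.mp hx), twistedExtension_of_notMem hx, hτ]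
    simp [hτ x]

end Involution

variable [Fintype X] {τ c₁ c₂ : Perm X}

theorem notMem_iff_apply_mem_of_disjoint_image (hτ : Involutive τ) {S : Finset X}
    (hcard : 2 * #S = Fintype.card X) (hdisj : _root_.Disjoint S (S.image τ)) (x : X) :
    x ∉ S ↔ τ x ∈ S := by
  have h_union : S ∪ S.image τ = univ := by
    apply eq_univ_of_card
    rw [card_union_of_disjoint hdisj, card_image_of_injective _ τ.injective, ← hcard, two_mul]
  constructor
  · intro hx
    obtain ⟨y, hy, rfl⟩ := mem_image.mp <|
      (mem_union.mp (h_union ▸ mem_univ x)).resolve_left hx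
    rwa [hτ]
  · exact fun hτx hx => disjoint_left.mp hdisj hτx (mem_image_of_mem _ hx)

theorem mem_support_iff_of_conj_eq {α : Perm X} (h : α * c₁ * α⁻¹ = c₂) (x : X) :
    α x ∈ c₂.support ↔ x ∈ c₁.support := by
  simp [← h, support_conj]

theorem exists_conj_eq_apply_eq (h₂ : c₂.IsCycle) (hconj : IsConj c₁ c₂) {a b : X}
    (ha : a ∈ c₁.support) (hb : b ∈ c₂.support) :
    ∃ σ : Perm X, σ * c₁ * σ⁻¹ = c₂ ∧ σ a = b := by
  obtain ⟨σ, hσ⟩ := isConj_iff.mp hconj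
  obtain ⟨k, hk⟩ := h₂.sameCycle (mem_support.mp ((mem_support_iff_of_conj_eq hσ a).mpr ha))
    (mem_support.mp hb)
  refine ⟨c₂ ^ k * σ, ?_, hk⟩
  rw [show c₂ ^ k * σ * c₁ * (c₂ ^ k * σ)⁻¹ = c₂ ^ k * (σ * c₁ * σ⁻¹) * (c₂ ^ k)⁻¹ by group,
    hσ, mul_inv_eq_iff_eq_mul, ((Commute.refl c₂).zpow_left k).eq]

theorem exists_commute_conj_eq_eqOn_support {σ : Perm X} (hτ : Involutive τ)
    (hS : ∀ x, x ∉ c₁.support ↔ τ x ∈ c₁.support) (hT : ∀ y, y ∉ c₂.support ↔ τ y ∈ c₂.support)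
    (hσ : σ * c₁ * σ⁻¹ = c₂) :
    ∃ α : Perm X, (α * τ = τ * α ∧ α * c₁ * α⁻¹ = c₂) ∧ ∀ x ∈ c₁.support, α x = σ x := by
  have hσT := mem_support_iff_of_conj_eq hσ
  let α : Perm X := Equiv.ofBijective _
    (leftInverse_twistedExtension hτ hS hT hσT).injective.bijective_of_finite
  refine ⟨α, ⟨?_, ?_⟩, fun x hx => twistedExtension_of_mem hx⟩
  · ext x
    exact twistedExtension_apply_involution hτ hS x
  · rw [mul_inv_eq_iff_eq_mul]
    ext x
    by_cases hx : x ∈ c₁.support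
    · change twistedExtension τ σ _ (c₁ x) = c₂ (twistedExtension τ σ _ x)
      rw [twistedExtension_of_mem (apply_mem_support.mpr hx), twistedExtension_of_mem hx]
      simpa using apply_zpow_of_conj_eq hσ 1 x
    · have hαx := mt (twistedExtension_mem_iff hτ hS hT hσT x).mp hx
      rw [mul_apply, notMem_support.mp hx, mul_apply]
      exact (notMem_support.mp hαx).symm

theorem eq_of_conj_eq_of_apply_eq {α β : Perm X} (hτ : Involutive τ) (h₁ : c₁.IsCycle)
    (hS : ∀ x, x ∉ c₁.support → τ x ∈ c₁.support)
    (hατ : α * τ = τ * α) (hβτ : β * τ = τ * β)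
    (hα : α * c₁ * α⁻¹ = c₂) (hβ : β * c₁ * β⁻¹ = c₂)
    {a : X} (ha : a ∈ c₁.support) (hab : α a = β a) : α = β := by
  have h_support : ∀ x ∈ c₁.support, α x = β x := fun x hx => by
    obtain ⟨k, rfl⟩ := h₁.sameCycle (mem_support.mp ha) (mem_support.mp hx)
    rw [apply_zpow_of_conj_eq hα, apply_zpow_of_conj_eq hβ, hab]
  ext x
  by_cases hx : x ∈ c₁.support
  · exact h_support x hx
  · calc α x = τ (α (τ x)) := by rw [← mul_apply α, hατ, mul_apply, hτ]
      _ = τ (β (τ x)) := by rw [h_support _ (hS x hx)]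
      _ = β x := by rw [← mul_apply β, hβτ, mul_apply, hτ]

theorem card_commute_conj_eq (hτ : Involutive τ) (h₁ : c₁.IsCycle) (h₂ : c₂.IsCycle)
    (hconj : IsConj c₁ c₂) (hS : ∀ x, x ∉ c₁.support ↔ τ x ∈ c₁.support)
    (hT : ∀ y, y ∉ c₂.support ↔ τ y ∈ c₂.support) :
    Nat.card {α : Perm X // α * τ = τ * α ∧ α * c₁ * α⁻¹ = c₂} = #c₂.support := by
  obtain ⟨a, ha⟩ := h₁.nonempty_support
  let F : {α : Perm X // α * τ = τ * α ∧ α * c₁ * α⁻¹ = c₂} → c₂.support :=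
    fun α => ⟨α.1 a, (mem_support_iff_of_conj_eq α.2.2 a).mpr ha⟩
  have hF : Bijective F := by
    refine ⟨fun α β hab => Subtype.ext ?_, fun ⟨b, hb⟩ => ?_⟩
    · exact eq_of_conj_eq_of_apply_eq hτ h₁ (fun x => (hS x).mp) α.2.1 β.2.1 α.2.2 β.2.2 ha
        (congrArg Subtype.val hab)
    · obtain ⟨σ, hσ, rfl⟩ := exists_conj_eq_apply_eq h₂ hconj ha hb
      obtain ⟨α, hα, hασ⟩ := exists_commute_conj_eq_eqOn_support hτ hS hT hσ
      exact ⟨⟨α, hα⟩, Subtype.ext (hασ a ha)⟩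
  rw [Nat.card_eq_of_bijective F hF, Nat.card_eq_finsetCard]

end Equiv.Perm

theorem card_gluing_permutations_general (d : ℕ)
    (c₁ c₂ : Equiv.Perm (Fin (2 * d)))
    (h₁ : c₁.IsCycle) (h₁' : c₁.support.card = d)
    (h₂ : c₂.IsCycle) (h₂' : c₂.support.card = d)
    (hA : Disjoint c₁.support
      (c₁.support.image (⇑((finRotate (2 * d)) ^ d))))
    (hB : Disjoint c₂.support
      (c₂.support.image (⇑((finRotate (2 * d)) ^ d)))) :
    Nat.card {α : Equiv.Perm (Fin (2 * d)) //
        α * (finRotate (2 * d)) ^ d = (finRotate (2 * d)) ^ d * α ∧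
        α * c₁ * α⁻¹ = c₂} = d := by
  have hτ := Equiv.Perm.involutive_finRotate_pow_half d
  have hcard : ∀ c : Equiv.Perm (Fin (2 * d)), #c.support = d → 2 * #c.support = Fintype.card _ :=
    fun c hc => by rw [hc, Fintype.card_fin]
  refine (Equiv.Perm.card_commute_conj_eq hτ h₁ h₂ (h₁.isConj h₂ (h₁'.trans h₂'.symm))
    (Equiv.Perm.notMem_iff_apply_mem_of_disjoint_image hτ (hcard c₁ h₁') hA)
    (Equiv.Perm.notMem_iff_apply_mem_of_disjoint_image hτ (hcard c₂ h₂') hB)).trans h₂'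

/-- Let `d ≥ 2` and let `τ = (1 d+1)(2 d+2)⋯(d 2d) ∈ S_{2d}`, realized on
`Fin (2d)` as `x ↦ x + d (mod 2d)`, i.e. `(finRotate (2d))^d`. If `c₁, c₂` are
`d`-cycles whose supports `A, B` satisfy `A ∩ τ(A) = ∅` and `B ∩ τ(B) = ∅`,
then the number of permutations `α ∈ S_{2d}` with `ατ = τα` and
`αc₁α⁻¹ = c₂` is exactly `d`. -/
theorem card_gluing_permutations (d : ℕ) (hd : 2 ≤ d)
    (c₁ c₂ : Equiv.Perm (Fin (2 * d)))
    (h₁ : c₁.IsCycle) (h₁' : c₁.support.card = d)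
    (h₂ : c₂.IsCycle) (h₂' : c₂.support.card = d)
    (hA : Disjoint c₁.support
      (c₁.support.image (⇑((finRotate (2 * d)) ^ d))))
    (hB : Disjoint c₂.support
      (c₂.support.image (⇑((finRotate (2 * d)) ^ d)))) :
    Nat.card {α : Equiv.Perm (Fin (2 * d)) //
        α * (finRotate (2 * d)) ^ d = (finRotate (2 * d)) ^ d * α ∧
        α * c₁ * α⁻¹ = c₂} = d :=
  card_gluing_permutations_general d c₁ c₂ h₁ h₁' h₂ h₂' hA hB
end
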